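/- arXiv:1808.10467 — 6 statements merged into one kernel-verified Lean document; each statement's English description precedes it below -/
import Mathlib

section
/- Let G be an asymmetric simple graph on a finite vertex set with at least 6 vertices. Then there exists a vertex v of G such that the graph obtained from G by adding one new vertex whose only neighbor is v is asymmetric. -/
/-- A simple graph is *asymmetric* if its only automorphism is the identity. -/
def SimpleGraph.IsAsymmetric {V : Type*} (G : SimpleGraph V) : Prop :=
  ∀ f : G ≃g G, ∀ v : V, f v = v

/-- The *asymmetric index* `ai(G)`: the minimum, over all asymmetric graphs `G'` on the
same vertex set, of the number of edges in which `G` and `G'` differ (edges removed plus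
edges added); `⊤` (infinity) if no asymmetric graph on the vertex set exists. -/
noncomputable def SimpleGraph.asymIndex {V : Type*} (G : SimpleGraph V) : ℕ∞ :=
  sInf {n : ℕ∞ | ∃ G' : SimpleGraph V, G'.IsAsymmetric ∧
    n = (symmDiff G.edgeSet G'.edgeSet).encard}

/-- The graph obtained from `G` by adding one new vertex (`none`) whose only neighbor is
`v`. -/
def SimpleGraph.addPendant {V : Type*} (G : SimpleGraph V) (v : V) :
    SimpleGraph (Option V) :=
  SimpleGraph.fromRel (fun x y =>
    (∃ a b, x = some a ∧ y = some b ∧ G.Adj a b) ∨ (x = none ∧ y = some v))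

/-! If `G` has a leaf (a vertex whose neighbor set has `ncard` one), attach the new vertex to the
leaf that starts a longest *leaf arm*, a path from a leaf through vertices of degree two. The new
vertex then starts a leaf arm longer than any leaf arm of `G`, so every automorphism fixes it and
therefore restricts to an automorphism of `G`. This uses that in an asymmetric graph no leaf arm
ends in a leaf: such an arm would be a path component, and reflecting it would be a nontrivial
automorphism. If `G` has no leaf, attach the new vertex to any non-isolated vertex; it is then the
only leaf. -/

theorem Set.eq_of_mem_of_ncard_eq_one {α : Type*} {s : Set α} (hs : s.ncard = 1) {a b : α}
    (ha : a ∈ s) (hb : b ∈ s) : a = b := by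
  obtain ⟨c, rfl⟩ := Set.ncard_eq_one.mp hs
  exact ha.trans hb.symm

theorem Set.eq_or_eq_of_mem_of_ncard_eq_two {α : Type*} {s : Set α} (hs : s.ncard = 2)
    {a b z : α} (ha : a ∈ s) (hb : b ∈ s) (hab : a ≠ b) (hz : z ∈ s) :
    z = a ∨ z = b := by
  obtain ⟨c, d, -, rfl⟩ := Set.ncard_eq_two.mp hs
  simp only [Set.mem_insert_iff, Set.mem_singleton_iff] at ha hb hz
  grind

namespace SimpleGraph

variable {V W : Type*} {G : SimpleGraph V} {H : SimpleGraph W}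

theorem Iso.ncard_neighborSet (f : G ≃g H) (x : V) :
    (H.neighborSet (f x)).ncard = (G.neighborSet x).ncard := by
  rw [← Nat.card_coe_set_eq, ← Nat.card_coe_set_eq]
  exact Nat.card_congr (f.mapNeighborSet x).symm

theorem IsAsymmetric.ne_bot [Nontrivial V] (hG : G.IsAsymmetric) : G ≠ ⊥ := by
  classical
  rintro rfl
  obtain ⟨a, b, hab⟩ := exists_pair_ne V
  have := hG ⟨Equiv.swap a b, by simp⟩ a
  simp only [RelIso.coe_fn_mk, Equiv.swap_apply_left] at this
  exact hab this.symm

/-- A path `x 0, …, x k` in `G` that starts at a leaf and whose inner vertices have degree two. -/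
structure IsLeafArm (G : SimpleGraph V) (k : ℕ) (x : ℕ → V) : Prop where
  injOn : Set.InjOn x (Set.Iic k)
  adj : ∀ i < k, G.Adj (x i) (x (i + 1))
  ncard_zero : (G.neighborSet (x 0)).ncard = 1
  ncard_of_lt : ∀ i, 0 < i → i < k → (G.neighborSet (x i)).ncard = 2

namespace IsLeafArm

variable {k : ℕ} {x y : ℕ → V}

theorem congr (h : G.IsLeafArm k x) (hxy : ∀ i ≤ k, x i = y i) : G.IsLeafArm k y where
  injOn i hi j hj hij := h.injOn hi hj (by rwa [hxy i hi, hxy j hj])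
  adj i hi := by simpa only [← hxy i hi.le, ← hxy (i + 1) hi] using h.adj i hi
  ncard_zero := by simpa only [← hxy 0 (Nat.zero_le k)] using h.ncard_zero
  ncard_of_lt i hi hik := by simpa only [← hxy i hik.le] using h.ncard_of_lt i hi hik

theorem map (h : G.IsLeafArm k x) (f : G ≃g H) : H.IsLeafArm k (f ∘ x) where
  injOn := f.injective.comp_injOn h.injOn
  adj i hi := f.map_rel_iff.mpr (h.adj i hi)
  ncard_zero := by simpa only [Function.comp_apply, f.ncard_neighborSet] using h.ncard_zero
  ncard_of_lt i hi hik := by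
    simpa only [Function.comp_apply, f.ncard_neighborSet] using h.ncard_of_lt i hi hik

theorem ne_of_ne (h : G.IsLeafArm k x) {i j : ℕ} (hi : i ≤ k) (hj : j ≤ k) (hij : i ≠ j) :
    x i ≠ x j :=
  fun e => hij (h.injOn hi hj e)

theorem adj_pred (h : G.IsLeafArm k x) {i : ℕ} (hi0 : 0 < i) (hik : i ≤ k) :
    G.Adj (x i) (x (i - 1)) := by
  obtain ⟨j, rfl⟩ := Nat.exists_eq_add_one_of_ne_zero hi0.ne'
  exact (h.adj j hik).symm

theorem lt_card [Fintype V] (h : G.IsLeafArm k x) : k < Fintype.card V := by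
  have hinj : Function.Injective fun i : Fin (k + 1) => x i := fun i j hij =>
    Fin.ext (h.injOn (Nat.lt_succ_iff.mp i.isLt) (Nat.lt_succ_iff.mp j.isLt) hij)
  simpa using Fintype.card_le_of_injective _ hinj

end IsLeafArm

theorem exists_isLeafArm_one {p : V} (hp : (G.neighborSet p).ncard = 1) :
    ∃ x, G.IsLeafArm 1 x := by
  obtain ⟨q, hq⟩ := Set.ncard_eq_one.mp hp
  have hpq : G.Adj p q := show q ∈ G.neighborSet p by simp [hq]
  refine ⟨fun i => if i = 0 then p else q, ⟨?_, ?_, by simpa using hp, by omega⟩⟩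
  · intro i hi j hj hij
    simp only [Set.mem_Iic] at hi hj
    interval_cases i <;> interval_cases j <;> simp_all [hpq.ne, hpq.ne.symm]
  · intro i hi
    obtain rfl : i = 0 := by omega
    simpa using hpq

theorem exists_isLeafArm_forall_le [Fintype V] {p : V} (hp : (G.neighborSet p).ncard = 1) :
    ∃ k x, G.IsLeafArm k x ∧ 0 < k ∧ ∀ k' y, G.IsLeafArm k' y → k' ≤ k := by
  classical
  let P k := ∃ x, G.IsLeafArm k x
  have hle : ∀ k, P k → k ≤ Fintype.card V := fun k ⟨_, hx⟩ => hx.lt_card.le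
  have hP1 : P 1 := exists_isLeafArm_one hp
  obtain ⟨x, hx⟩ := Nat.findGreatest_spec (hle 1 hP1) hP1
  refine ⟨_, x, hx, Nat.le_findGreatest (hle 1 hP1) hP1, fun k' y hy => ?_⟩
  exact Nat.le_findGreatest (hle k' ⟨y, hy⟩) ⟨y, hy⟩

section Reflection

variable {k : ℕ} {x : ℕ → V}

theorem IsLeafArm.exists_eq_of_adj (h : G.IsLeafArm k x) (hk : 0 < k)
    (hend : (G.neighborSet (x k)).ncard = 1) {i : ℕ} {z : V} (hi : i ≤ k) (hz : G.Adj (x i) z) :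
    ∃ j ≤ k, x j = z ∧ (j + 1 = i ∨ i + 1 = j) := by
  rcases Nat.eq_zero_or_pos i with rfl | hi0
  · exact ⟨1, hk, Set.eq_of_mem_of_ncard_eq_one h.ncard_zero (h.adj 0 hk) hz, by omega⟩
  rcases hi.eq_or_lt with rfl | hik
  · exact ⟨i - 1, by omega, Set.eq_of_mem_of_ncard_eq_one hend (h.adj_pred hi0 le_rfl) hz,
      by omega⟩
  rcases Set.eq_or_eq_of_mem_of_ncard_eq_two (h.ncard_of_lt i hi0 hik) (h.adj_pred hi0 hik.le)
    (h.adj i hik) (h.ne_of_ne (by omega) hik (by omega)) hz with rfl | rfl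
  · exact ⟨i - 1, by omega, rfl, by omega⟩
  · exact ⟨i + 1, hik, rfl, by omega⟩

open Classical in
noncomputable def armReflection (k : ℕ) (x : ℕ → V) (z : V) : V :=
  if z ∈ x '' Set.Iic k then x (k - Function.invFunOn x (Set.Iic k) z) else z

theorem armReflection_apply_of_le (hx : Set.InjOn x (Set.Iic k)) {i : ℕ} (hi : i ≤ k) :
    armReflection k x (x i) = x (k - i) := by
  rw [armReflection, if_pos ⟨i, hi, rfl⟩, hx.leftInvOn_invFunOn hi]

theorem armReflection_apply_of_notMem {z : V} (hz : z ∉ x '' Set.Iic k) :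
    armReflection k x z = z :=
  if_neg hz

theorem involutive_armReflection (hx : Set.InjOn x (Set.Iic k)) :
    Function.Involutive (armReflection k x) := by
  intro z
  by_cases hz : z ∈ x '' Set.Iic k
  · obtain ⟨i, hi, rfl⟩ := hz
    rw [armReflection_apply_of_le hx hi, armReflection_apply_of_le hx (Nat.sub_le k i),
      Nat.sub_sub_self hi]
  · rw [armReflection_apply_of_notMem hz, armReflection_apply_of_notMem hz]

theorem IsLeafArm.adj_armReflection (h : G.IsLeafArm k x) (hk : 0 < k)
    (hend : (G.neighborSet (x k)).ncard = 1) {a b : V} (hab : G.Adj a b) :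
    G.Adj (armReflection k x a) (armReflection k x b) := by
  by_cases ha : a ∈ x '' Set.Iic k
  · obtain ⟨i, hi : i ≤ k, rfl⟩ := ha
    obtain ⟨j, hj, rfl, hij⟩ := h.exists_eq_of_adj hk hend hi hab
    rw [armReflection_apply_of_le h.injOn hi, armReflection_apply_of_le h.injOn hj]
    rcases hij with rfl | rfl
    · rw [show k - j = k - (j + 1) + 1 by omega]
      exact h.adj _ (by omega)
    · rw [show k - i = k - (i + 1) + 1 by omega]
      exact (h.adj _ (by omega)).symm
  · have hb : b ∉ x '' Set.Iic k := by
      rintro ⟨j, hj, rfl⟩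
      obtain ⟨i, hi, rfl, -⟩ := h.exists_eq_of_adj hk hend hj hab.symm
      exact ha ⟨i, hi, rfl⟩
    rwa [armReflection_apply_of_notMem ha, armReflection_apply_of_notMem hb]

theorem IsLeafArm.ncard_neighborSet_last_ne_one (h : G.IsLeafArm k x) (hG : G.IsAsymmetric)
    (hk : 0 < k) : (G.neighborSet (x k)).ncard ≠ 1 := by
  intro hend
  have hinv := involutive_armReflection h.injOn
  have hfix := hG ⟨hinv.toPerm, fun {a b} => ⟨fun hab => by
      simpa only [Function.Involutive.coe_toPerm, hinv a, hinv b] using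
        h.adj_armReflection hk hend hab,
    h.adj_armReflection hk hend⟩⟩ (x 0)
  change armReflection k x (x 0) = x 0 at hfix
  rw [armReflection_apply_of_le h.injOn (Nat.zero_le k), Nat.sub_zero] at hfix
  exact h.ne_of_ne le_rfl (Nat.zero_le k) hk.ne' hfix

end Reflection

section Pendant

variable {v a b : V}

@[simp]
theorem addPendant_adj_some_some : (G.addPendant v).Adj (some a) (some b) ↔ G.Adj a b := by
  simp only [addPendant, fromRel_adj, ne_eq, Option.some.injEq, reduceCtorEq, false_and, or_false,
    exists_and_left, exists_eq_left', G.adj_comm b a, or_self, and_iff_right_iff_imp]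
  exact Adj.ne

@[simp]
theorem addPendant_adj_none_some : (G.addPendant v).Adj none (some a) ↔ a = v := by
  simp [addPendant, fromRel_adj, eq_comm]

@[simp]
theorem addPendant_adj_some_none : (G.addPendant v).Adj (some a) none ↔ a = v := by
  rw [adj_comm, addPendant_adj_none_some]

theorem neighborSet_addPendant_none : (G.addPendant v).neighborSet none = {some v} := by
  ext (_ | a) <;> simp

theorem neighborSet_addPendant_some_of_ne (h : a ≠ v) :
    (G.addPendant v).neighborSet (some a) = some '' G.neighborSet a := by
  ext (_ | b) <;> simp [h]

theorem neighborSet_addPendant_some_self :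
    (G.addPendant v).neighborSet (some v) = insert none (some '' G.neighborSet v) := by
  ext (_ | b) <;> simp

theorem ncard_neighborSet_addPendant_none : ((G.addPendant v).neighborSet none).ncard = 1 := by
  rw [neighborSet_addPendant_none, Set.ncard_singleton]

theorem ncard_neighborSet_addPendant_some_of_ne (h : a ≠ v) :
    ((G.addPendant v).neighborSet (some a)).ncard = (G.neighborSet a).ncard := by
  rw [neighborSet_addPendant_some_of_ne h, Set.ncard_image_of_injective _ (Option.some_injective V)]

theorem ncard_neighborSet_addPendant_some_self (hv : (G.neighborSet v).Finite) :
    ((G.addPendant v).neighborSet (some v)).ncard = (G.neighborSet v).ncard + 1 := by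
  rw [neighborSet_addPendant_some_self, Set.ncard_insert_of_notMem (by simp) (hv.image _),
    Set.ncard_image_of_injective _ (Option.some_injective V)]

theorem IsAsymmetric.addPendant_of_forall_apply_none (hG : G.IsAsymmetric)
    (h : ∀ f : G.addPendant v ≃g G.addPendant v, f none = none) :
    (G.addPendant v).IsAsymmetric := by
  intro f
  have hsome (a : V) : ∃ b, f (some a) = some b :=
    Option.ne_none_iff_exists'.mp fun ha => by simpa using f.injective (ha.trans (h f).symm)
  have he (a : V) : some (f.toEquiv.removeNone a) = f (some a) :=
    Equiv.removeNone_some _ (hsome a)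
  let e : G ≃g G := ⟨f.toEquiv.removeNone, fun {a b} => by
    rw [← addPendant_adj_some_some (v := v), he, he, f.map_rel_iff, addPendant_adj_some_some]⟩
  rintro (_ | a)
  · exact h f
  · rw [← he]
    exact congrArg some (hG e a)

theorem IsAsymmetric.addPendant_of_forall_ncard_ne_one [Finite V] (hG : G.IsAsymmetric)
    (hleaf : ∀ u, (G.neighborSet u).ncard ≠ 1) {w : V} (hvw : G.Adj v w) :
    (G.addPendant v).IsAsymmetric := by
  refine hG.addPendant_of_forall_apply_none fun f => ?_
  by_contra hf
  obtain ⟨u, hu⟩ := Option.ne_none_iff_exists'.mp hf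
  have hu1 : ((G.addPendant v).neighborSet (some u)).ncard = 1 := by
    rw [← hu, f.ncard_neighborSet, ncard_neighborSet_addPendant_none]
  rcases eq_or_ne u v with rfl | huv
  · rw [ncard_neighborSet_addPendant_some_self (Set.toFinite _)] at hu1
    have := (Set.ncard_pos (s := G.neighborSet u) (Set.toFinite _)).mpr ⟨w, hvw⟩
    omega
  · exact hleaf u (by rwa [ncard_neighborSet_addPendant_some_of_ne huv] at hu1)

namespace IsLeafArm

variable {k : ℕ} {x : ℕ → V}

theorem addPendant (h : G.IsLeafArm k x) :
    (G.addPendant (x 0)).IsLeafArm (k + 1) fun | 0 => none | i + 1 => some (x i) where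
  injOn := by
    rintro (_ | i) hi (_ | j) hj hij <;> simp only [reduceCtorEq, Option.some.injEq] at hij
    · rfl
    · rw [h.injOn (Nat.le_of_succ_le_succ hi) (Nat.le_of_succ_le_succ hj) hij]
  adj := by
    rintro (_ | i) hi
    · simp
    · simpa using h.adj i (by omega)
  ncard_zero := ncard_neighborSet_addPendant_none
  ncard_of_lt := by
    rintro (_ | i) hi0 hik
    · omega
    rcases Nat.eq_zero_or_pos i with rfl | hi
    · rw [ncard_neighborSet_addPendant_some_self
        (Set.finite_of_ncard_ne_zero (by rw [h.ncard_zero]; omega)), h.ncard_zero]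
    · rw [ncard_neighborSet_addPendant_some_of_ne (h.ne_of_ne (by omega) (Nat.zero_le k) hi.ne')]
      exact h.ncard_of_lt i hi (by omega)

theorem of_addPendant {z : ℕ → V} (hv : (G.neighborSet v).ncard = 1)
    (h : (G.addPendant v).IsLeafArm k (some ∘ z)) : G.IsLeafArm k z where
  injOn i hi j hj hij := h.injOn hi hj (congrArg some hij)
  adj i hi := addPendant_adj_some_some.mp (h.adj i hi)
  ncard_zero := by
    have hne : z 0 ≠ v := by
      intro hz
      have := h.ncard_zero
      rw [Function.comp_apply, hz, ncard_neighborSet_addPendant_some_self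
        (Set.finite_of_ncard_ne_zero (by omega)), hv] at this
      omega
    rw [← ncard_neighborSet_addPendant_some_of_ne hne]
    exact h.ncard_zero
  ncard_of_lt i hi hik := by
    have hne : z i ≠ v := by
      intro hz
      have hpred := addPendant_adj_some_some.mp (h.adj_pred hi hik.le)
      have hsucc := addPendant_adj_some_some.mp (h.adj i hik)
      rw [hz] at hpred hsucc
      exact h.ne_of_ne (by omega) hik (by omega)
        (congrArg some (Set.eq_of_mem_of_ncard_eq_one hv hpred hsucc))
    rw [← ncard_neighborSet_addPendant_some_of_ne hne]
    exact h.ncard_of_lt i hi hik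

theorem isAsymmetric_addPendant (h : G.IsLeafArm k x) (hG : G.IsAsymmetric) (hk : 0 < k)
    (hmax : ∀ k' y, G.IsLeafArm k' y → k' ≤ k) : (G.addPendant (x 0)).IsAsymmetric := by
  refine hG.addPendant_of_forall_apply_none fun f => ?_
  by_contra hf
  have hy := h.addPendant
  have hsome : ∀ i ≤ k + 1, f ((fun | 0 => none | i + 1 => some (x i)) i) ≠ none := by
    rintro (_ | i) hi hfi
    · exact hf hfi
    have h1 : ((G.addPendant (x 0)).neighborSet (some (x i))).ncard = 1 := by
      rw [← f.ncard_neighborSet, hfi, ncard_neighborSet_addPendant_none]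
    rcases (Nat.le_of_succ_le_succ hi).lt_or_eq with hik | rfl
    · have := hy.ncard_of_lt (i + 1) (Nat.succ_pos i) (by omega)
      simp only [h1] at this
      omega
    · rw [ncard_neighborSet_addPendant_some_of_ne (h.ne_of_ne le_rfl (Nat.zero_le i) hk.ne')] at h1
      exact h.ncard_neighborSet_last_ne_one hG hk h1
  have hB := ((hy.map f).congr fun i hi => (Option.getD_of_ne_none (hsome i hi) (x 0)).symm)
    |>.of_addPendant h.ncard_zero
  have := hmax _ _ hB
  omega

end IsLeafArm

end Pendant

end SimpleGraph

/-- Every asymmetric graph on at least 6 vertices can be extended to an asymmetric graph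
by adding a single vertex joined by a single edge to some vertex `v`. -/
theorem exists_isAsymmetric_addPendant {V : Type*} [Fintype V]
    (hV : 6 ≤ Fintype.card V) (G : SimpleGraph V) (hG : G.IsAsymmetric) :
    ∃ v : V, (G.addPendant v).IsAsymmetric := by
  by_cases hleaf : ∃ p, (G.neighborSet p).ncard = 1
  · obtain ⟨p, hp⟩ := hleaf
    obtain ⟨k, x, hx, hk, hmax⟩ := G.exists_isLeafArm_forall_le hp
    exact ⟨x 0, hx.isAsymmetric_addPendant hG hk hmax⟩
  · have : Nontrivial V := Fintype.one_lt_card_iff_nontrivial.mp (by omega)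
    obtain ⟨v, w, hvw⟩ := G.ne_bot_iff_exists_adj.mp hG.ne_bot
    exact ⟨v, hG.addPendant_of_forall_ncard_ne_one (not_exists.mp hleaf) hvw⟩
end

section
/- For any simple graph G on a finite vertex set with at least 6 vertices, ai(G) is finite; that is, there exists an asymmetric simple graph on the same vertex set as G. -/
/-!
Take the path `0 - 1 - ⋯ - (n-1)` and add the chord `{1, 3}`. For `n ≥ 6` an automorphism must
fix the leaf `0`: otherwise it sends `0` to the other leaf `n-1` and hence the three neighbours
of `1` into the two neighbours of `n-2`. It then fixes `n-1` as well, and fixing a vertex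
together with all but one of its neighbours forces it to fix that last neighbour too; walking
down from `n-1` to `3` and up from `0` through `1` to `2` fixes every vertex.
-/

namespace SimpleGraph

variable {V W : Type*} {G : SimpleGraph V} {H : SimpleGraph W}

theorem IsAsymmetric.of_iso (e : G ≃g H) (hH : H.IsAsymmetric) : G.IsAsymmetric := by
  intro f v
  apply e.injective
  simpa using hH ((e.symm.trans f).trans e) (e v)

theorem Iso.neighborSet_subsingleton (f : G ≃g H) {v : V}
    (hv : (G.neighborSet v).Subsingleton) : (H.neighborSet (f v)).Subsingleton := by
  rw [← f.image_neighborSet]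
  exact hv.image f

theorem Iso.apply_eq_self_of_adj (f : G ≃g G) {u w : V} (hu : f u = u) (huw : G.Adj u w)
    (hfix : ∀ x, G.Adj u x → x ≠ w → f x = x) : f w = w := by
  by_contra hw
  have hadj : G.Adj u (f w) := by simpa [hu] using f.map_adj_iff.mpr huw
  exact hw (f.injective (hfix _ hadj hw))

theorem asymIndex_le_encard {G' : SimpleGraph V} (hG' : G'.IsAsymmetric) :
    G.asymIndex ≤ (symmDiff G.edgeSet G'.edgeSet).encard :=
  sInf_le ⟨G', hG', rfl⟩

theorem asymIndex_ne_top_of_isAsymmetric [Finite V] {G' : SimpleGraph V}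
    (hG' : G'.IsAsymmetric) : G.asymIndex ≠ ⊤ :=
  ne_top_of_le_ne_top (Set.toFinite _).encard_lt_top.ne (asymIndex_le_encard hG')

def pathWithChord (n : ℕ) : SimpleGraph (Fin n) :=
  pathGraph n ⊔ fromRel fun i j => (i : ℕ) = 1 ∧ (j : ℕ) = 3

namespace pathWithChord

variable {n : ℕ}

theorem adj_iff {i j : Fin n} :
    (pathWithChord n).Adj i j ↔ (i : ℕ) + 1 = j ∨ (j : ℕ) + 1 = i ∨
      ((i : ℕ) = 1 ∧ (j : ℕ) = 3) ∨ ((i : ℕ) = 3 ∧ (j : ℕ) = 1) := by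
  simp only [pathWithChord, sup_adj, pathGraph_adj, fromRel_adj, ne_eq, Fin.ext_iff]
  omega

theorem neighborSet_subsingleton_iff (hn : 5 ≤ n) {i : Fin n} :
    ((pathWithChord n).neighborSet i).Subsingleton ↔ (i : ℕ) = 0 ∨ (i : ℕ) = n - 1 := by
  constructor
  · intro h
    by_contra hi
    have hlo : (pathWithChord n).Adj i ⟨i - 1, by omega⟩ := adj_iff.mpr (by dsimp only; omega)
    have hhi : (pathWithChord n).Adj i ⟨i + 1, by omega⟩ := adj_iff.mpr (by simp)
    have := Fin.mk.inj (h hlo hhi)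
    omega
  · intro hi x hx y hy
    rw [mem_neighborSet, adj_iff] at hx hy
    ext
    omega

variable (f : pathWithChord n ≃g pathWithChord n)

theorem val_apply_eq_zero_or_eq_sub_one (hn : 5 ≤ n) {i : Fin n}
    (hi : (i : ℕ) = 0 ∨ (i : ℕ) = n - 1) : (f i : ℕ) = 0 ∨ (f i : ℕ) = n - 1 :=
  (neighborSet_subsingleton_iff hn).mp
    (f.neighborSet_subsingleton ((neighborSet_subsingleton_iff hn).mpr hi))

theorem apply_zero (hn : 6 ≤ n) : f ⟨0, by omega⟩ = ⟨0, by omega⟩ := by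
  refine (val_apply_eq_zero_or_eq_sub_one f (i := ⟨0, by omega⟩) (by omega) (.inl rfl)).elim
    (fun h => Fin.ext h) fun hlast => absurd hlast ?_
  have adj_apply : ∀ a b : ℕ, (ha : a < n) → (hb : b < n) → a + 1 = b ∨ (a = 1 ∧ b = 3) →
      (pathWithChord n).Adj (f ⟨a, ha⟩) (f ⟨b, hb⟩) :=
    fun a b ha hb hab => f.map_adj_iff.mpr (adj_iff.mpr (by dsimp only; omega))
  have val_ne : ∀ a b : ℕ, (ha : a < n) → (hb : b < n) → a ≠ b →
      (f ⟨a, ha⟩ : ℕ) ≠ f ⟨b, hb⟩ :=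
    fun a b ha hb hab => Fin.val_ne_of_ne (f.injective.ne (by simpa using hab))
  have h01 := adj_iff.mp (adj_apply 0 1 (by omega) (by omega) (by omega))
  have h12 := adj_iff.mp (adj_apply 1 2 (by omega) (by omega) (by omega))
  have h13 := adj_iff.mp (adj_apply 1 3 (by omega) (by omega) (by omega))
  have := val_ne 0 2 (by omega) (by omega) (by omega)
  have := val_ne 0 3 (by omega) (by omega) (by omega)
  have := val_ne 2 3 (by omega) (by omega) (by omega)
  omega

theorem apply_last (hn : 6 ≤ n) : f ⟨n - 1, by omega⟩ = ⟨n - 1, by omega⟩ := by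
  refine (val_apply_eq_zero_or_eq_sub_one f (i := ⟨n - 1, by omega⟩) (by omega) (.inr rfl)).elim
    (fun h0 => ?_) fun h => Fin.ext h
  have : f ⟨n - 1, by omega⟩ = f ⟨0, by omega⟩ := by rw [apply_zero f hn]; exact Fin.ext h0
  have := Fin.mk.inj (f.injective this)
  omega

theorem apply_of_three_le (hn : 6 ≤ n) (i : Fin n) (hi : 3 ≤ (i : ℕ)) : f i = i := by
  suffices h : ∀ k ≤ n - 1, 3 ≤ k → ∀ j : Fin n, k ≤ j → f j = j from h 3 (by omega) le_rfl i hi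
  intro k hk
  induction hk using Nat.decreasingInduction with
  | self =>
    intro _ j hj
    rw [show j = ⟨n - 1, by omega⟩ from Fin.ext (by dsimp only; omega)]
    exact apply_last f hn
  | of_succ k hkn ih =>
    intro hk3 j hj
    rcases (show k = j ∨ k + 1 ≤ j by omega) with hkj | hj
    · rw [show j = ⟨k, by omega⟩ from Fin.ext hkj.symm]
      refine f.apply_eq_self_of_adj (u := ⟨k + 1, by omega⟩) (ih (by omega) _ le_rfl)
        (adj_iff.mpr (by simp)) fun x hx hxk => ih (by omega) x ?_
      rw [adj_iff] at hx
      have := Fin.val_ne_of_ne hxk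
      dsimp only at hx this
      omega
    · exact ih (by omega) j hj

end pathWithChord

theorem pathWithChord_isAsymmetric {n : ℕ} (hn : 6 ≤ n) : (pathWithChord n).IsAsymmetric := by
  intro f i
  have h0 := pathWithChord.apply_zero f hn
  have hge := pathWithChord.apply_of_three_le f hn
  have h1 : f ⟨1, by omega⟩ = ⟨1, by omega⟩ := by
    refine f.apply_eq_self_of_adj h0 (pathWithChord.adj_iff.mpr (by simp)) fun x hx hx1 => ?_
    rw [pathWithChord.adj_iff] at hx
    exact absurd (Fin.ext (by dsimp only at hx ⊢; omega)) hx1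
  have h2 : f ⟨2, by omega⟩ = ⟨2, by omega⟩ := by
    refine f.apply_eq_self_of_adj h1 (pathWithChord.adj_iff.mpr (by simp)) fun x hx hx2 => ?_
    rw [pathWithChord.adj_iff] at hx
    have := Fin.val_ne_of_ne hx2
    dsimp only at hx this
    rcases (show (x : ℕ) = 0 ∨ (x : ℕ) = 3 by omega) with hx | hx
    · rwa [show x = ⟨0, by omega⟩ from Fin.ext hx]
    · exact hge x hx.ge
  rcases (show (i : ℕ) = 0 ∨ (i : ℕ) = 1 ∨ (i : ℕ) = 2 ∨ 3 ≤ (i : ℕ) by omega)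
    with hi | hi | hi | hi
  · rwa [show i = ⟨0, by omega⟩ from Fin.ext hi]
  · rwa [show i = ⟨1, by omega⟩ from Fin.ext hi]
  · rwa [show i = ⟨2, by omega⟩ from Fin.ext hi]
  · exact hge i hi

theorem exists_isAsymmetric_of_six_le_card [Fintype V] (hV : 6 ≤ Fintype.card V) :
    ∃ G : SimpleGraph V, G.IsAsymmetric :=
  ⟨_, (pathWithChord_isAsymmetric hV).of_iso (Iso.comap (Fintype.equivFin V) _)⟩

end SimpleGraph

/-- Every graph on at least six vertices has finite asymmetric index; equivalently there
is an asymmetric graph on its vertex set. -/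
theorem asymIndex_ne_top {V : Type*} [Fintype V] (hV : 6 ≤ Fintype.card V)
    (G : SimpleGraph V) :
    G.asymIndex ≠ ⊤ ∧ ∃ G' : SimpleGraph V, G'.IsAsymmetric := by
  obtain ⟨G', hG'⟩ := SimpleGraph.exists_isAsymmetric_of_six_le_card hV
  exact ⟨SimpleGraph.asymIndex_ne_top_of_isAsymmetric hG', G', hG'⟩
end

section
/- For every n ≥ 6, the asymmetric index of the path graph on n vertices satisfies ai(P_n) = 1. -/
open SimpleGraph

def myG (n : ℕ) : SimpleGraph (Fin n) :=
  SimpleGraph.fromRel (fun a b => a.val + 1 = b.val ∨ (a.val = 1 ∧ b.val = 3))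

lemma myG_adj {n : ℕ} {a b : Fin n} :
    (myG n).Adj a b ↔ (a.val + 1 = b.val ∨ b.val + 1 = a.val) ∨
      (a.val = 1 ∧ b.val = 3) ∨ (a.val = 3 ∧ b.val = 1) := by
  rw [myG, fromRel_adj]
  constructor
  · rintro ⟨hne, h⟩; tauto
  · intro h
    refine ⟨fun hab => ?_, by tauto⟩
    subst hab
    omega

/-- Purely arithmetic core: a bijective-on-`[0,n)` map preserving the adjacency
relation of `myG n` is the identity. -/
lemma arith_core {n : ℕ} (hn : 6 ≤ n) (F : ℕ → ℕ)
    (hlt : ∀ a, a < n → F a < n)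
    (hinj : ∀ a b, a < n → b < n → F a = F b → a = b)
    (hsurj : ∀ m, m < n → ∃ x, x < n ∧ F x = m)
    (hA : ∀ a b, a < n → b < n →
      (((F a + 1 = F b ∨ F b + 1 = F a) ∨ (F a = 1 ∧ F b = 3) ∨ (F a = 3 ∧ F b = 1)) ↔
        ((a + 1 = b ∨ b + 1 = a) ∨ (a = 1 ∧ b = 3) ∨ (a = 3 ∧ b = 1)))) :
    ∀ m, m < n → F m = m := by
  have h0 : F 0 = 0 := by
    have h0n : 0 < n := by omega
    have hmlt := hlt 0 h0n
    have hends : F 0 = 0 ∨ F 0 = n - 1 := by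
      by_contra hc
      push_neg at hc
      obtain ⟨hc0, hc1⟩ := hc
      obtain ⟨x, hx, hfx⟩ := hsurj (F 0 - 1) (by omega)
      obtain ⟨y, hy, hfy⟩ := hsurj (F 0 + 1) (by omega)
      have e1 := hA 0 x h0n hx
      have e2 := hA 0 y h0n hy
      have hx1 : x = 1 := by omega
      have hy1 : y = 1 := by omega
      rw [hx1] at hfx
      rw [hy1] at hfy
      omega
    rcases hends with h' | h'
    · exact h'
    exfalso
    have e01 := hA 0 1 h0n (by omega)
    have l1 := hlt 1 (by omega)
    have e12 := hA 1 2 (by omega) (by omega)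
    have e13 := hA 1 3 (by omega) (by omega)
    have l2 := hlt 2 (by omega)
    have l3 := hlt 3 (by omega)
    have d20 : F 2 ≠ F 0 := fun hh => by have := hinj 2 0 (by omega) h0n hh; omega
    have d30 : F 3 ≠ F 0 := fun hh => by have := hinj 3 0 (by omega) h0n hh; omega
    have d32 : F 3 ≠ F 2 := fun hh => by have := hinj 3 2 (by omega) (by omega) hh; omega
    omega
  have h1 : F 1 = 1 := by
    have := hA 0 1 (by omega) (by omega)
    have := hlt 1 (by omega)
    omega
  have h3 : F 3 = 3 := by
    have e13 := hA 1 3 (by omega) (by omega)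
    have d30 : F 3 ≠ F 0 := fun hh => by have := hinj 3 0 (by omega) (by omega) hh; omega
    by_contra hc
    have hf3 : F 3 = 2 := by omega
    have e32 := hA 3 2 (by omega) (by omega)
    have e34 := hA 3 4 (by omega) (by omega)
    have d21 : F 2 ≠ F 1 := fun hh => by have := hinj 2 1 (by omega) (by omega) hh; omega
    have d41 : F 4 ≠ F 1 := fun hh => by have := hinj 4 1 (by omega) (by omega) hh; omega
    have d42 : F 4 ≠ F 2 := fun hh => by have := hinj 4 2 (by omega) (by omega) hh; omega
    omega
  have h2 : F 2 = 2 := by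
    have e12 := hA 1 2 (by omega) (by omega)
    have e32 := hA 3 2 (by omega) (by omega)
    have d20 : F 2 ≠ F 0 := fun hh => by have := hinj 2 0 (by omega) (by omega) hh; omega
    omega
  have h4 : F 4 = 4 := by
    have e34 := hA 3 4 (by omega) (by omega)
    have d41 : F 4 ≠ F 1 := fun hh => by have := hinj 4 1 (by omega) (by omega) hh; omega
    have d42 : F 4 ≠ F 2 := fun hh => by have := hinj 4 2 (by omega) (by omega) hh; omega
    omega
  intro m
  induction m using Nat.strong_induction_on with
  | _ m ih =>
    intro hm
    match m, hm with
    | 0, hm => exact h0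
    | 1, hm => exact h1
    | 2, hm => exact h2
    | 3, hm => exact h3
    | 4, hm => exact h4
    | (k+5), hm =>
      have ih1 := ih (k + 4) (by omega) (by omega)
      have ih0 := ih (k + 3) (by omega) (by omega)
      have e := hA (k + 4) (k + 5) (by omega) hm
      have d : F (k + 5) ≠ F (k + 3) := fun hh => by
        have := hinj (k + 5) (k + 3) hm (by omega) hh; omega
      omega

lemma myG_asym {n : ℕ} (hn : 6 ≤ n) : (myG n).IsAsymmetric := by
  intro f
  obtain ⟨F, hF⟩ : ∃ F : ℕ → ℕ, ∀ (a : ℕ) (ha : a < n), (f ⟨a, ha⟩).val = F a :=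
    ⟨fun a => if ha : a < n then (f ⟨a, ha⟩).val else 0, fun a ha => by simp [ha]⟩
  have hlt : ∀ a, a < n → F a < n := fun a ha => hF a ha ▸ (f ⟨a, ha⟩).isLt
  have hinj : ∀ a b, a < n → b < n → F a = F b → a = b := by
    intro a b ha hb hab
    have : f ⟨a, ha⟩ = f ⟨b, hb⟩ := Fin.ext (by rw [hF a ha, hF b hb]; exact hab)
    exact congrArg Fin.val (f.toEquiv.injective this)
  have hsurj : ∀ m, m < n → ∃ x, x < n ∧ F x = m := by
    intro m hm
    obtain ⟨x, hx⟩ := f.toEquiv.surjective ⟨m, hm⟩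
    refine ⟨x.val, x.isLt, ?_⟩
    rw [← hF x.val x.isLt]
    rw [show (⟨x.val, x.isLt⟩ : Fin n) = x from Fin.eta x x.isLt]
    exact congrArg Fin.val hx
  have hA : ∀ a b, a < n → b < n →
      (((F a + 1 = F b ∨ F b + 1 = F a) ∨ (F a = 1 ∧ F b = 3) ∨ (F a = 3 ∧ F b = 1)) ↔
        ((a + 1 = b ∨ b + 1 = a) ∨ (a = 1 ∧ b = 3) ∨ (a = 3 ∧ b = 1))) := by
    intro a b ha hb
    rw [← hF a ha, ← hF b hb]
    exact myG_adj.symm.trans (f.map_adj_iff.trans myG_adj)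
  have key := arith_core hn F hlt hinj hsurj hA
  intro v
  have := key v.val v.isLt
  rw [← hF v.val v.isLt] at this
  exact Fin.ext (by rw [Fin.eta] at this; exact this)

lemma mySymmDiff_eq {n : ℕ} (hn : 6 ≤ n) :
    symmDiff (pathGraph n).edgeSet (myG n).edgeSet =
      {s((⟨1, by omega⟩ : Fin n), (⟨3, by omega⟩ : Fin n))} := by
  ext e
  induction e with
  | _ a b =>
    simp only [Set.mem_symmDiff, mem_edgeSet, pathGraph_adj, myG_adj,
      Set.mem_singleton_iff, Sym2.eq_iff, Fin.ext_iff, Fin.val_mk]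
    have ha := a.isLt
    have hb := b.isLt
    omega

lemma pathGraph_not_asym {n : ℕ} (hn : 6 ≤ n) : ¬ (pathGraph n).IsAsymmetric := by
  intro h
  have hrev : ∀ a b : Fin n, (pathGraph n).Adj (Fin.revPerm a) (Fin.revPerm b) ↔
      (pathGraph n).Adj a b := by
    intro a b
    rw [pathGraph_adj, pathGraph_adj]
    simp only [Fin.revPerm_apply, Fin.val_rev]
    have := a.isLt
    have := b.isLt
    omega
  let e : pathGraph n ≃g pathGraph n := ⟨Fin.revPerm, hrev _ _⟩
  have h0 := h e ⟨0, by omega⟩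
  have := congrArg Fin.val h0
  simp only [Fin.val_mk] at this
  rw [show (e ⟨0, by omega⟩ : Fin n).val = n - 1 from ?_] at this
  · omega
  · show ((Fin.revPerm (⟨0, by omega⟩ : Fin n)) : Fin n).val = n - 1
    simp [Fin.val_rev]

/-- For `n ≥ 6`, the asymmetric index of the path `P_n` is `1`. -/
theorem asymIndex_pathGraph {n : ℕ} (hn : 6 ≤ n) :
    (SimpleGraph.pathGraph n).asymIndex = 1 := by
  rw [SimpleGraph.asymIndex]
  refine le_antisymm (sInf_le ⟨myG n, myG_asym hn, ?_⟩) (le_sInf ?_)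
  · rw [mySymmDiff_eq hn, Set.encard_singleton]
  · rintro x ⟨G', hG', rfl⟩
    rw [ENat.one_le_iff_ne_zero]
    intro h0
    rw [Set.encard_eq_zero, ← Set.bot_eq_empty, symmDiff_eq_bot,
      SimpleGraph.edgeSet_inj] at h0
    exact pathGraph_not_asym hn (h0 ▸ hG')
end

section
/- For every n ≥ 6, the asymmetric index of the wheel graph on n vertices satisfies ai(W_n) = 2. -/
/-- The wheel graph `W_n` on `n` vertices: a hub vertex (`none`) adjacent to each of the
`n - 1` rim vertices, and rim vertex `i` adjacent to rim vertex `j` iff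
`i - j ≡ ±1 (mod n-1)`. -/
def SimpleGraph.wheelGraph (n : ℕ) : SimpleGraph (Option (ZMod (n - 1))) :=
  SimpleGraph.fromRel (fun x y =>
    (∃ a b, x = some a ∧ y = some b ∧ a - b = 1) ∨ x = none)

lemma ZMod.natCast_ne_zero_of_pos_of_lt {k m : ℕ} (h0 : 0 < k) (hk : k < m) :
    (k : ZMod m) ≠ 0 := by
  rw [Ne, ZMod.natCast_eq_zero_iff]
  exact Nat.not_dvd_of_pos_of_lt h0 hk

namespace SimpleGraph

section General

variable {V W : Type*} {G G' : SimpleGraph V}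

lemma asymIndex_le_encard_symmDiff (hG' : G'.IsAsymmetric) :
    G.asymIndex ≤ (symmDiff G.edgeSet G'.edgeSet).encard :=
  sInf_le ⟨G', hG', rfl⟩

lemma not_isAsymmetric_of_forall_mem_symmDiff_map_eq (f : G ≃g G) {v : V} (hv : f v ≠ v)
    (hf : ∀ e ∈ symmDiff G.edgeSet G'.edgeSet, e.map f = e) : ¬ G'.IsAsymmetric := by
  have hE' : G'.edgeSet = symmDiff G.edgeSet (symmDiff G.edgeSet G'.edgeSet) :=
    (symmDiff_symmDiff_cancel_left _ _).symm
  set D := symmDiff G.edgeSet G'.edgeSet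
  have hD : ∀ e, e.map f ∈ D ↔ e ∈ D := by
    refine fun e => ⟨fun he => ?_, fun he => (hf e he).symm ▸ he⟩
    rwa [← Sym2.map.injective f.injective (hf _ he)]
  have hG : ∀ e, e.map f ∈ G.edgeSet ↔ e ∈ G.edgeSet :=
    fun _ => f.toEmbedding.map_mem_edgeSet_iff
  have hmap : ∀ e, e.map f ∈ G'.edgeSet ↔ e ∈ G'.edgeSet := by
    intro e
    simp only [hE', Set.mem_symmDiff, hG, hD]
  exact fun h => hv (h ⟨f.toEquiv, fun {a b} => hmap s(a, b)⟩ v)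

lemma two_le_asymIndex [Nonempty V]
    (h : ∀ e : Sym2 V, ∃ f : G ≃g G, (∃ v, f v ≠ v) ∧ e.map f = e) : 2 ≤ G.asymIndex := by
  refine le_sInf ?_
  rintro _ ⟨G', hG', rfl⟩
  by_contra! hlt
  obtain ⟨e, he⟩ : ∃ e, symmDiff G.edgeSet G'.edgeSet ⊆ {e} := by
    rcases Set.encard_le_one_iff_eq.mp (Order.le_of_lt_succ hlt) with hD | ⟨e, hD⟩
    · obtain ⟨v⟩ := ‹Nonempty V›
      exact ⟨s(v, v), hD ▸ Set.empty_subset _⟩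
    · exact ⟨e, hD.subset⟩
  obtain ⟨f, ⟨v, hv⟩, hfe⟩ := h e
  exact not_isAsymmetric_of_forall_mem_symmDiff_map_eq f hv
    (fun e' he' => (Set.mem_singleton_iff.mp (he he')) ▸ hfe) hG'

lemma Embedding.encard_neighborSet_le {G' : SimpleGraph W} (f : G ↪g G') (v : V) :
    (G.neighborSet v).encard ≤ (G'.neighborSet (f v)).encard :=
  Set.encard_le_encard_of_injOn (fun _ hw => f.map_adj_iff.mpr hw) f.injective.injOn

end General

section Wheel

variable {n : ℕ}

@[simp]
lemma wheelGraph_adj_none {v : Option (ZMod (n - 1))} :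
    (wheelGraph n).Adj none v ↔ v ≠ none := by
  simp [wheelGraph, eq_comm]

@[simp]
lemma wheelGraph_adj_some_some {a b : ZMod (n - 1)} :
    (wheelGraph n).Adj (some a) (some b) ↔ a ≠ b ∧ (b = a - 1 ∨ b = a + 1) := by
  simp only [wheelGraph, fromRel_adj, ne_eq, Option.some.injEq, reduceCtorEq, or_false,
    exists_and_left, exists_eq_left']
  constructor <;> rintro ⟨hab, h | h⟩ <;> refine ⟨hab, ?_⟩
  all_goals first
    | exact Or.inl (by linear_combination -h)
    | exact Or.inr (by linear_combination h)

@[simp]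
lemma wheelGraph_adj_some_none (a : ZMod (n - 1)) : (wheelGraph n).Adj (some a) none :=
  (wheelGraph n).adj_symm (by simp)

def wheelReflection (n : ℕ) (c : ZMod (n - 1)) : wheelGraph n ≃g wheelGraph n where
  toEquiv := (Equiv.subLeft c).optionCongr
  map_rel_iff' := by
    rintro (_ | a) (_ | b)
    · simp
    · simp
    · simp
    · simp only [Equiv.optionCongr_apply, Option.map_some, Equiv.subLeft_apply,
        wheelGraph_adj_some_some, ne_eq, sub_right_inj]
      refine and_congr_right fun _ => ⟨?_, ?_⟩ <;> rintro (h | h)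
      all_goals first
        | exact Or.inl (by linear_combination -h)
        | exact Or.inr (by linear_combination -h)

@[simp]
lemma wheelReflection_none (c : ZMod (n - 1)) : wheelReflection n c none = none := rfl

@[simp]
lemma wheelReflection_some (c a : ZMod (n - 1)) :
    wheelReflection n c (some a) = some (c - a) := rfl

lemma exists_wheelReflection_map_eq (e : Sym2 (Option (ZMod (n - 1)))) :
    ∃ c, e.map (wheelReflection n c) = e := by
  induction e using Sym2.ind with
  | _ x y =>
    rcases x with _ | a <;> rcases y with _ | b
    · exact ⟨0, rfl⟩
    · exact ⟨b + b, by simp⟩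
    · exact ⟨a + a, by simp⟩
    · exact ⟨a + b, by simp [Sym2.eq_swap]⟩

lemma exists_wheelReflection_apply_ne (h2 : (2 : ZMod (n - 1)) ≠ 0) (c : ZMod (n - 1)) :
    ∃ v, wheelReflection n c v ≠ v := by
  by_contra! hfix
  have h0 := hfix (some 0)
  have h1 := hfix (some 1)
  simp only [wheelReflection_some, Option.some.injEq] at h0 h1
  exact h2 (by linear_combination h0 - h1)

lemma two_le_asymIndex_wheelGraph (hn : 4 ≤ n) : 2 ≤ (wheelGraph n).asymIndex := by
  have h2 : (2 : ZMod (n - 1)) ≠ 0 := by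
    exact_mod_cast ZMod.natCast_ne_zero_of_pos_of_lt (k := 2) (by omega) (by omega)
  refine two_le_asymIndex fun e => ?_
  obtain ⟨c, hc⟩ := exists_wheelReflection_map_eq (n := n) e
  exact ⟨wheelReflection n c, exists_wheelReflection_apply_ne h2 c, hc⟩

def brokenWheel (n : ℕ) : SimpleGraph (Option (ZMod (n - 1))) :=
  (wheelGraph n).deleteEdges {s(some 0, some 1), s(none, some 0)}

lemma symmDiff_edgeSet_brokenWheel (h1 : (1 : ZMod (n - 1)) ≠ 0) :
    symmDiff (wheelGraph n).edgeSet (brokenWheel n).edgeSet =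
      {s(some 0, some 1), s(none, some 0)} := by
  have hsub : {s(some 0, some 1), s(none, some 0)} ⊆ (wheelGraph n).edgeSet := by
    simp [Set.insert_subset_iff, h1.symm]
  rw [brokenWheel, edgeSet_deleteEdges, symmDiff_of_ge Set.sdiff_subset, sdiff_sdiff_right_self,
    inf_eq_right.mpr hsub]

lemma encard_symmDiff_edgeSet_brokenWheel (h1 : (1 : ZMod (n - 1)) ≠ 0) :
    (symmDiff (wheelGraph n).edgeSet (brokenWheel n).edgeSet).encard = 2 := by
  rw [symmDiff_edgeSet_brokenWheel h1]
  exact Set.encard_pair (by simp)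

lemma brokenWheel_adj_none {v : Option (ZMod (n - 1))} :
    (brokenWheel n).Adj none v ↔ v ≠ none ∧ v ≠ some 0 := by
  simp [brokenWheel]

lemma brokenWheel_adj_zero (h1 : (1 : ZMod (n - 1)) ≠ 0) (h2 : (2 : ZMod (n - 1)) ≠ 0)
    {v : Option (ZMod (n - 1))} : (brokenWheel n).Adj (some 0) v ↔ v = some (-1) := by
  rcases v with _ | b
  · simp [brokenWheel]
  · simp only [brokenWheel, deleteEdges_adj, wheelGraph_adj_some_some, Set.mem_insert_iff,
      Set.mem_singleton_iff, Sym2.eq_iff, Option.some.injEq, reduceCtorEq, zero_sub, zero_add,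
      true_and, false_and, and_false, or_false]
    have hne : (-1 : ZMod (n - 1)) ≠ 1 := fun h => h2 (by linear_combination -h)
    constructor
    · rintro ⟨⟨-, hb | hb⟩, hb1⟩
      · exact hb
      · exact absurd (Or.inl hb) hb1
    · rintro rfl
      exact ⟨⟨fun h => h1 (by linear_combination h), Or.inl rfl⟩, by simp [hne, h1.symm]⟩

lemma brokenWheel_adj_sub_one (h1 : (1 : ZMod (n - 1)) ≠ 0) (h2 : (2 : ZMod (n - 1)) ≠ 0)
    {b : ZMod (n - 1)} (hb : b ≠ 1) : (brokenWheel n).Adj (some b) (some (b - 1)) := by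
  simp only [brokenWheel, deleteEdges_adj, wheelGraph_adj_some_some, Set.mem_insert_iff,
    Set.mem_singleton_iff, Sym2.eq_iff, Option.some.injEq, reduceCtorEq, false_and, and_false,
    or_false, true_or, and_true]
  refine ⟨fun h => h1 (by linear_combination h), ?_⟩
  rintro (⟨rfl, h⟩ | ⟨rfl, -⟩)
  · exact h2 (by linear_combination -h)
  · exact hb rfl

lemma four_le_encard_neighborSet_brokenWheel_none (hn : 6 ≤ n) :
    4 ≤ ((brokenWheel n).neighborSet none).encard := by
  have : NeZero (n - 1) := ⟨by omega⟩
  have hN : (brokenWheel n).neighborSet none = some '' {0}ᶜ := by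
    ext (_ | a) <;> simp [brokenWheel_adj_none]
  have h := Set.encard_sdiff_singleton_add_one (Set.mem_univ (0 : ZMod (n - 1)))
  rw [Set.encard_univ, ENat.card_eq_coe_fintype_card, ZMod.card, ← Set.compl_eq_univ_sdiff] at h
  rw [hN, Option.some_injective _ |>.encard_image]
  lift ({0}ᶜ : Set (ZMod (n - 1))).encard to ℕ using (Set.toFinite _).encard_lt_top.ne with k
  norm_cast at h ⊢
  omega

lemma neighborSet_brokenWheel_some_subset (a : ZMod (n - 1)) :
    (brokenWheel n).neighborSet (some a) ⊆ {some (a - 1), some (a + 1), none} := by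
  rintro (_ | b) h
  · simp
  · have h' : (wheelGraph n).Adj (some a) (some b) := deleteEdges_le _ h
    rcases ((wheelGraph_adj_some_some).mp h').2 with rfl | rfl <;> simp

lemma encard_neighborSet_brokenWheel_some_le (a : ZMod (n - 1)) :
    ((brokenWheel n).neighborSet (some a)).encard ≤ 3 := by
  refine (Set.encard_le_encard (neighborSet_brokenWheel_some_subset a)).trans ?_
  rw [← Finset.coe_pair, ← Finset.coe_insert, Set.encard_coe_eq_coe_finsetCard]
  exact_mod_cast Finset.card_le_three

lemma iso_brokenWheel_apply_none (hn : 6 ≤ n) (f : brokenWheel n ≃g brokenWheel n) :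
    f none = none := by
  rcases hf : f none with _ | a
  · rfl
  · have h := (four_le_encard_neighborSet_brokenWheel_none hn).trans
      (f.toEmbedding.encard_neighborSet_le none)
    change 4 ≤ ((brokenWheel n).neighborSet (f none)).encard at h
    rw [hf] at h
    have := h.trans (encard_neighborSet_brokenWheel_some_le a)
    norm_num at this

lemma iso_brokenWheel_apply_zero (f : brokenWheel n ≃g brokenWheel n) (hnone : f none = none) :
    f (some 0) = some 0 := by
  have h : ¬ (brokenWheel n).Adj (f none) (f (some 0)) := by
    simp [f.map_adj_iff, brokenWheel_adj_none]
  rw [hnone, brokenWheel_adj_none, not_and_or, not_not, not_not] at h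
  refine h.resolve_left fun h0 => ?_
  exact Option.some_ne_none 0 (f.injective (h0.trans hnone.symm))

lemma iso_brokenWheel_apply_sub_one (h1 : (1 : ZMod (n - 1)) ≠ 0) (h2 : (2 : ZMod (n - 1)) ≠ 0)
    (f : brokenWheel n ≃g brokenWheel n) (hnone : f none = none) {b : ZMod (n - 1)}
    (hb : b ≠ 1) (hfb : f (some b) = some b) (hfb' : f (some (b + 1)) = some (b + 1)) :
    f (some (b - 1)) = some (b - 1) := by
  have hadj : (brokenWheel n).Adj (some b) (f (some (b - 1))) := by
    rw [← hfb, f.map_adj_iff]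
    exact brokenWheel_adj_sub_one h1 h2 hb
  rcases neighborSet_brokenWheel_some_subset b hadj with h | h | h
  · exact h
  · rw [← hfb'] at h
    have := Option.some.inj (f.injective h)
    exact absurd (by linear_combination -this) h2
  · rw [← hnone] at h
    exact absurd (f.injective h) (Option.some_ne_none _)

theorem isAsymmetric_brokenWheel (hn : 6 ≤ n) : (brokenWheel n).IsAsymmetric := by
  have : NeZero (n - 1) := ⟨by omega⟩
  have h1 : (1 : ZMod (n - 1)) ≠ 0 := by
    exact_mod_cast ZMod.natCast_ne_zero_of_pos_of_lt (k := 1) (by omega) (by omega)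
  have h2 : (2 : ZMod (n - 1)) ≠ 0 := by
    exact_mod_cast ZMod.natCast_ne_zero_of_pos_of_lt (k := 2) (by omega) (by omega)
  intro f
  have hnone := iso_brokenWheel_apply_none hn f
  have h0 := iso_brokenWheel_apply_zero f hnone
  have hm1 : f (some (-1)) = some (-1) := by
    rw [← brokenWheel_adj_zero h1 h2, ← h0, f.map_adj_iff, brokenWheel_adj_zero h1 h2]
  have hrim : ∀ k : ℕ, k < n - 1 →
      f (some (-(k : ZMod (n - 1)))) = some (-(k : ZMod (n - 1))) := by
    intro k
    induction k using Nat.twoStepInduction with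
    | zero => exact fun _ => by simpa using h0
    | one => exact fun _ => by simpa using hm1
    | more k ih ih' =>
      intro hk
      have hb : -((k + 1 : ℕ) : ZMod (n - 1)) ≠ 1 := by
        intro h
        refine ZMod.natCast_ne_zero_of_pos_of_lt (k := k + 2) (by omega) hk ?_
        push_cast at h ⊢
        linear_combination -h
      have := iso_brokenWheel_apply_sub_one h1 h2 f hnone hb (ih' (by omega))
        (by simpa using ih (by omega))
      rwa [show -((k + 2 : ℕ) : ZMod (n - 1)) = -((k + 1 : ℕ) : ZMod (n - 1)) - 1 by
        push_cast; ring]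
  rintro (_ | a)
  · exact hnone
  · simpa using hrim (-a).val (ZMod.val_lt _)

end Wheel

end SimpleGraph

/-- For `n ≥ 6`, the asymmetric index of the wheel graph `W_n` is `2`. -/
theorem asymIndex_wheelGraph {n : ℕ} (hn : 6 ≤ n) :
    (SimpleGraph.wheelGraph n).asymIndex = 2 := by
  have h1 : (1 : ZMod (n - 1)) ≠ 0 := by
    exact_mod_cast ZMod.natCast_ne_zero_of_pos_of_lt (k := 1) (by omega) (by omega)
  exact le_antisymm
    ((SimpleGraph.asymIndex_le_encard_symmDiff (SimpleGraph.isAsymmetric_brokenWheel hn)).trans_eq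
      (SimpleGraph.encard_symmDiff_edgeSet_brokenWheel h1))
    (SimpleGraph.two_le_asymIndex_wheelGraph (by omega))
end

section
/- For every n ≥ 6, the asymmetric index of the star graph satisfies ⌊(n−1)/2⌋ ≤ ai(K_{1,n−1}) ≤ n − 1. -/
/-!
Lower bound: the leaves of a star all have the same neighbourhood, while in an asymmetric graph
distinct vertices have distinct neighbourhoods (otherwise swapping them is an automorphism). So
in an asymmetric graph `G'` at most one leaf is incident to no edge of `K_{1,m} ∆ G'`, and as an
edge meets at most two leaves, `m ≤ 2 |K_{1,m} ∆ G'| + 1`.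

Upper bound: delete the edge `c v₀` from `K_{1,m}` and add the path `v₀ v₁ ⋯ v_{m-1}`, changing
`m` edges. For `m ≥ 5` the centre `c` is the only vertex adjacent to all but one other vertex, so
every automorphism fixes `c`, then `v₀` (the only non-neighbour of `c`), and then the path vertex
by vertex: `v_{k+1}` is the only neighbour of `v_k` besides `c` and `v_{k-1}`.
-/

open Function Set

theorem Function.Injective.apply_eq_self_of_mapsTo {α : Type*} {f : α → α} (hf : Injective f)
    {s : Set α} (hs : MapsTo f s s) {a : α} (ha : a ∈ s) (h : ∀ b ∈ s, b ≠ a → f b = b) :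
    f a = a := by
  by_contra hne
  exact hne (hf (h (f a) (hs ha) hne))

theorem ENat.coe_div_two_le_of_le_two_mul_add_one {m : ℕ} {d : ℕ∞} (h : (m : ℕ∞) ≤ 2 * d + 1) :
    ((m / 2 : ℕ) : ℕ∞) ≤ d := by
  induction d using ENat.recTopCoe with
  | top => exact le_top
  | coe k =>
    norm_cast at h ⊢
    omega

theorem Sym2.encard_le_two_mul_encard_of_forall_mem {α : Type*} {S : Set α} {D : Set (Sym2 α)}
    (h : ∀ v ∈ S, ∃ e ∈ D, v ∈ e) : S.encard ≤ 2 * D.encard := by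
  obtain hD | hD := D.finite_or_infinite
  swap
  · simp [hD.encard_eq, ENat.mul_top]
  have hcover : S ⊆ ⋃ e ∈ hD.toFinset, {v | v ∈ e} := fun v hv => by
    obtain ⟨e, he, hve⟩ := h v hv
    exact mem_biUnion (hD.mem_toFinset.mpr he) hve
  have hedge (e : Sym2 α) : {v | v ∈ e}.encard ≤ 2 := by
    induction e using Sym2.ind with | _ a b =>
    have hab : {v | v ∈ s(a, b)} = {a, b} := by ext; simp
    rw [hab]
    exact (encard_insert_le _ _).trans (by simp; norm_num)
  calc S.encard ≤ ∑ e ∈ hD.toFinset, {v | v ∈ e}.encard :=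
        (encard_le_encard hcover).trans (hD.toFinset.set_encard_biUnion_le _)
    _ ≤ ∑ _e ∈ hD.toFinset, 2 := Finset.sum_le_sum fun e _ => hedge e
    _ = 2 * D.encard := by
        rw [Finset.sum_const, nsmul_eq_mul, hD.encard_eq_coe_toFinset_card, mul_comm]

namespace SimpleGraph

section General

variable {V W : Type*}

theorem IsAsymmetric.neighborSet_injective {G : SimpleGraph V} (hG : G.IsAsymmetric) :
    Injective G.neighborSet := by
  classical
  intro u v huv
  have hN (w : V) : G.Adj w u ↔ G.Adj w v := by
    simpa [G.adj_comm w] using congrArg (w ∈ ·) huv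
  let σ : G ≃g G :=
    { toEquiv := Equiv.swap u v
      map_rel_iff' := by
        intro a b
        simp only [Equiv.swap_apply_def]
        split_ifs <;> grind [SimpleGraph.adj_comm, SimpleGraph.irrefl] }
  simpa [σ] using (hG σ u).symm

theorem Iso.adj_of_forall_ne_ne {G : SimpleGraph V} {G' : SimpleGraph W} (f : G ≃g G')
    {x y : V} (h : ∀ z, z ≠ x → z ≠ y → G.Adj x z) :
    ∀ z, z ≠ f x → z ≠ f y → G'.Adj (f x) z := by
  intro z hzx hzy
  rw [← f.apply_symm_apply z, f.map_adj_iff]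
  exact h _ (by rintro rfl; simp at hzx) (by rintro rfl; simp at hzy)

theorem neighborSet_eq_of_forall_notMem_symmDiff {G G' : SimpleGraph V} {v : V}
    (hv : ∀ e ∈ symmDiff G.edgeSet G'.edgeSet, v ∉ e) : G.neighborSet v = G'.neighborSet v := by
  ext w
  by_contra hw
  exact hv s(v, w) (by simp only [Set.mem_symmDiff, mem_edgeSet]; tauto) (Sym2.mem_mk_left v w)

theorem encard_le_two_mul_encard_symmDiff_add_one {G G' : SimpleGraph V}
    (hG' : G'.IsAsymmetric) {S : Set V}
    (hS : ∀ u ∈ S, ∀ v ∈ S, G.neighborSet u = G.neighborSet v) :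
    S.encard ≤ 2 * (symmDiff G.edgeSet G'.edgeSet).encard + 1 := by
  set D := symmDiff G.edgeSet G'.edgeSet
  set T := {v ∈ S | ∃ e ∈ D, v ∈ e}
  have hT : T.encard ≤ 2 * D.encard :=
    Sym2.encard_le_two_mul_encard_of_forall_mem fun v hv => hv.2
  have hST : (S \ T).encard ≤ 1 := by
    refine encard_le_one_iff.mpr fun u v hu hv => hG'.neighborSet_injective ?_
    have hfix {w} (hw : w ∈ S \ T) : G.neighborSet w = G'.neighborSet w :=
      neighborSet_eq_of_forall_notMem_symmDiff fun e he hwe => hw.2 ⟨hw.1, e, he, hwe⟩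
    rw [← hfix hu, ← hfix hv, hS u hu.1 v hv.1]
  calc S.encard ≤ (S \ T).encard + T.encard := encard_le_encard_sdiff_add_encard S T
    _ ≤ 1 + 2 * D.encard := add_le_add hST hT
    _ = 2 * D.encard + 1 := add_comm _ _

theorem completeBipartiteGraph_neighborSet_inr (w : W) :
    (completeBipartiteGraph V W).neighborSet (.inr w) = range .inl := by
  ext (x | x) <;> simp

theorem IsAsymmetric.enatCard_le_two_mul_encard_symmDiff_completeBipartiteGraph_add_one
    {G' : SimpleGraph (V ⊕ W)} (hG' : G'.IsAsymmetric) :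
    ENat.card W ≤ 2 * (symmDiff (completeBipartiteGraph V W).edgeSet G'.edgeSet).encard + 1 :=
  Sum.inr_injective.encard_range.trans <| encard_le_two_mul_encard_symmDiff_add_one hG' <| by
    rintro _ ⟨u, rfl⟩ _ ⟨v, rfl⟩
    simp only [completeBipartiteGraph_neighborSet_inr]

end General

def starPath (m : ℕ) : SimpleGraph (Fin 1 ⊕ Fin m) where
  Adj
    | .inl _, .inl _ => False
    | .inl _, .inr j => j.val ≠ 0
    | .inr i, .inl _ => i.val ≠ 0
    | .inr i, .inr j => (pathGraph m).Adj i j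
  symm := ⟨by
    rintro (_ | _) (_ | _) h
    exacts [h, h, h, h.symm]⟩
  loopless := ⟨by rintro (_ | _) h; exacts [h, (pathGraph m).loopless.irrefl _ h]⟩

namespace starPath

variable {m : ℕ}

local notation "c" => (Sum.inl 0 : Fin 1 ⊕ Fin m)

@[simp] theorem adj_inl_inr (a : Fin 1) (j : Fin m) :
    (starPath m).Adj (.inl a) (.inr j) ↔ j.val ≠ 0 := Iff.rfl

@[simp] theorem adj_inr_inl (i : Fin m) (a : Fin 1) :
    (starPath m).Adj (.inr i) (.inl a) ↔ i.val ≠ 0 := Iff.rfl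

@[simp] theorem adj_inr_inr (i j : Fin m) :
    (starPath m).Adj (.inr i) (.inr j) ↔ i.val + 1 = j.val ∨ j.val + 1 = i.val :=
  pathGraph_adj

@[simp] theorem not_adj_inl_inl (a b : Fin 1) : ¬ (starPath m).Adj (.inl a) (.inl b) := id

theorem inl_eq (a : Fin 1) : (Sum.inl a : Fin 1 ⊕ Fin m) = c := by
  rw [Subsingleton.elim a 0]

theorem eq_of_not_adj_center (hm : 0 < m) {z : Fin 1 ⊕ Fin m} (hz : ¬ (starPath m).Adj c z) :
    z = c ∨ z = .inr ⟨0, hm⟩ := by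
  rcases z with a | j
  · exact .inl (inl_eq a)
  · exact .inr (by simp_all [Fin.ext_iff])

theorem exists_ne_ne_not_adj_inr (hm : 5 ≤ m) (i : Fin m) (y : Fin 1 ⊕ Fin m) :
    ∃ z, z ≠ .inr i ∧ z ≠ y ∧ ¬ (starPath m).Adj (.inr i) z := by
  obtain ⟨a, b, ha, hb, hab, hai, hbi⟩ : ∃ a b : ℕ, a < m ∧ b < m ∧ a ≠ b ∧
      (a ≠ i.val ∧ a ≠ i.val + 1 ∧ a + 1 ≠ i.val) ∧ (b ≠ i.val ∧ b ≠ i.val + 1 ∧ b + 1 ≠ i.val) :=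
    ⟨if i.val ≤ 1 then 3 else 0, if i.val ≤ 2 then 4 else 1, by split_ifs <;> omega⟩
  by_cases hy : y = .inr ⟨a, ha⟩
  · refine ⟨.inr ⟨b, hb⟩, ?_, ?_, ?_⟩ <;> simp [hy, Fin.ext_iff] <;> omega
  · refine ⟨.inr ⟨a, ha⟩, ?_, Ne.symm hy, ?_⟩ <;> simp [Fin.ext_iff] <;> omega

variable (f : starPath m ≃g starPath m)

theorem apply_center (hm : 5 ≤ m) : f c = c := by
  have hc := f.adj_of_forall_ne_ne (x := c) (y := .inr ⟨0, by omega⟩) fun z hzc hz0 => by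
    by_contra h
    rcases eq_of_not_adj_center (by omega) h with rfl | rfl <;> simp_all
  rcases hfc : f c with a | i
  · exact inl_eq a
  · obtain ⟨z, hzi, hzy, hz⟩ := exists_ne_ne_not_adj_inr hm i (f (.inr ⟨0, by omega⟩))
    exact absurd (hc z (hfc ▸ hzi) hzy) (hfc ▸ hz)

theorem apply_inr (hm : 5 ≤ m) (k : ℕ) (hk : k < m) : f (.inr ⟨k, hk⟩) = .inr ⟨k, hk⟩ := by
  induction k using Nat.strong_induction_on with
  | _ k ih =>
  rcases k with _ | l
  · refine f.injective.apply_eq_self_of_mapsTo (s := {z | ¬ (starPath m).Adj c z}) ?_ (by simp) ?_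
    · intro z hz
      have := f.map_adj_iff.not.mpr hz
      rwa [apply_center f hm] at this
    · intro b hb hb0
      rcases eq_of_not_adj_center (by omega) hb with rfl | rfl
      exacts [apply_center f hm, absurd rfl hb0]
  · have hl := ih l (by omega) (by omega)
    refine f.injective.apply_eq_self_of_mapsTo
      (s := (starPath m).neighborSet (.inr ⟨l, by omega⟩)) ?_ (by simp) ?_
    · intro z hz
      rw [← hl]
      exact f.apply_mem_neighborSet_iff.mpr hz
    · rintro (a | ⟨j, hj⟩) hb hne
      · rw [inl_eq a]; exact apply_center f hm
      · simp only [mem_neighborSet, adj_inr_inr, ne_eq, Sum.inr.injEq, Fin.mk.injEq] at hb hne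
        exact ih j (by omega) hj

theorem isAsymmetric (hm : 5 ≤ m) : (starPath m).IsAsymmetric := by
  rintro f (a | ⟨k, hk⟩)
  · rw [inl_eq a]; exact apply_center f hm
  · exact apply_inr f hm k hk

theorem symmDiff_edgeSet_subset_range :
    symmDiff (completeBipartiteGraph (Fin 1) (Fin m)).edgeSet (starPath m).edgeSet ⊆
      range fun k : Fin m =>
        s(if k.val = 0 then c else .inr ⟨k.val - 1, (k.val.sub_le 1).trans_lt k.isLt⟩, .inr k) := by
  intro e he
  induction e using Sym2.ind with | _ x y =>
  rw [mem_symmDiff, mem_edgeSet, mem_edgeSet] at he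
  rcases x with a | i <;> rcases y with b | j
  · simp at he
  · refine ⟨j, ?_⟩
    simp_all [inl_eq a]
  · refine ⟨i, ?_⟩
    simp_all [inl_eq b]
  · obtain h | h : i.val + 1 = j.val ∨ j.val + 1 = i.val := by simpa using he
    · exact ⟨j, by dsimp only; rw [if_neg (by omega)]; simp [Fin.ext_iff]; omega⟩
    · exact ⟨i, by dsimp only; rw [if_neg (by omega)]; simp [Fin.ext_iff]; omega⟩

theorem encard_symmDiff_edgeSet_le :
    (symmDiff (completeBipartiteGraph (Fin 1) (Fin m)).edgeSet (starPath m).edgeSet).encard ≤ m :=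
  calc _ ≤ _ := encard_le_encard symmDiff_edgeSet_subset_range
    _ ≤ ENat.card (Fin m) := by rw [← image_univ, ← encard_univ]; exact encard_image_le _ _
    _ = m := by simp

end starPath

end SimpleGraph

/-- For `n ≥ 6`, the star `K_{1,n-1}` satisfies `⌊(n-1)/2⌋ ≤ ai(K_{1,n-1}) ≤ n - 1`. -/
theorem asymIndex_star {n : ℕ} (hn : 6 ≤ n) :
    (((n - 1) / 2 : ℕ) : ℕ∞) ≤ (completeBipartiteGraph (Fin 1) (Fin (n - 1))).asymIndex ∧
      (completeBipartiteGraph (Fin 1) (Fin (n - 1))).asymIndex ≤ ((n - 1 : ℕ) : ℕ∞) := by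
  constructor
  · refine le_sInf ?_
    rintro _ ⟨G', hG', rfl⟩
    refine ENat.coe_div_two_le_of_le_two_mul_add_one ?_
    simpa using hG'.enatCard_le_two_mul_encard_symmDiff_completeBipartiteGraph_add_one
  · exact sInf_le_of_le ⟨_, SimpleGraph.starPath.isAsymmetric (by omega), rfl⟩
      SimpleGraph.starPath.encard_symmDiff_edgeSet_le
end

section
/- For all integers s ≥ 8 and t ≥ 1, the asymmetric index of the disjoint union of a complete graph on s vertices and t isolated vertices satisfies ai(K_s + tK_1) ≤ (s − 2) + (t − 1). -/
/-- The disjoint union `G + H` of two graphs: the edges of `G` together with the edges of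
`H`, and no edges between the two parts. -/
def SimpleGraph.disjUnionGraph {V W : Type*} (G : SimpleGraph V) (H : SimpleGraph W) :
    SimpleGraph (V ⊕ W) :=
  SimpleGraph.fromRel (fun x y =>
    (∃ a b, x = Sum.inl a ∧ y = Sum.inl b ∧ G.Adj a b) ∨
    (∃ a b, x = Sum.inr a ∧ y = Sum.inr b ∧ H.Adj a b))

/-!
Flip `s - 2` pairs inside the clique so that it becomes the complement of a spider: the path
`0 - 1 - ⋯ - (s-3)` with a pendant vertex `s-2` at `2`, together with the isolated vertex `s-1`.
Then add the `t - 1` edges of the path `(s-1) - 0 - 1 - ⋯ - (t-2)` through the isolated vertices.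
An automorphism of the resulting graph maps the clique to itself, because clique vertices have
at least three neighbours and the other vertices have at most two. On the clique it is an
automorphism of the spider. The legs at the centre `2` have the distinct lengths `1`, `2` and
`s - 5 ≥ 3`, so the spider has no automorphism other than the identity. Finally the automorphism
fixes the added path one vertex at a time, starting from `s-1`, and then the one vertex that is left.
-/

open scoped symmDiff

theorem Set.two_lt_encard_iff {α : Type*} {s : Set α} :
    2 < s.encard ↔ ∃ a b c, a ∈ s ∧ b ∈ s ∧ c ∈ s ∧ a ≠ b ∧ a ≠ c ∧ b ≠ c := by
  constructor
  · intro h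
    obtain ⟨u, hus, hu⟩ := exists_subset_encard_eq (Order.add_one_le_of_lt h)
    obtain ⟨a, b, c, hab, hac, hbc, rfl⟩ := encard_eq_three.mp hu
    exact ⟨a, b, c, hus (by simp), hus (by simp), hus (by simp), hab, hac, hbc⟩
  · rintro ⟨a, b, c, ha, hb, hc, hab, hac, hbc⟩
    calc (2 : ℕ∞) < 3 := by norm_num
      _ = ({a, b, c} : Set α).encard := (encard_eq_three.mpr ⟨a, b, c, hab, hac, hbc, rfl⟩).symm
      _ ≤ s.encard := encard_le_encard (by simp [Set.insert_subset_iff, ha, hb, hc])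

theorem Function.Injective.apply_eq_of_forall_ne {α : Type*} {f : α → α} (hf : f.Injective)
    {y : α} (h : ∀ z, z ≠ y → f z = z) : f y = y := by
  by_contra hne
  exact hne (hf (h _ hne))

namespace SimpleGraph

variable {V W α : Type*} {G : SimpleGraph V} {H : SimpleGraph W}

theorem edgeSet_symmDiff (G F : SimpleGraph V) : (G ∆ F).edgeSet = G.edgeSet ∆ F.edgeSet := by
  rw [symmDiff_def, symmDiff_def, edgeSet_sup, edgeSet_sdiff, edgeSet_sdiff]
  rfl

theorem asymIndex_le_encard_edgeSet {F : SimpleGraph V} (h : (G ∆ F).IsAsymmetric) :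
    G.asymIndex ≤ F.edgeSet.encard := by
  rw [← symmDiff_symmDiff_cancel_left G.edgeSet F.edgeSet, ← edgeSet_symmDiff]
  exact sInf_le ⟨G ∆ F, h, rfl⟩

theorem Iso.encard_neighborSet (f : G ≃g H) (v : V) :
    (H.neighborSet (f v)).encard = (G.neighborSet v).encard := by
  rw [← f.image_neighborSet, f.injective.encard_image]

theorem Iso.apply_eq_of_adj (f : G ≃g G) {x y : V} (hx : f x = x) (hxy : G.Adj x y)
    (h : ∀ z, G.Adj x z → z ≠ y → f z = z) : f y = y := by
  by_contra hne
  have hadj : G.Adj x (f y) := by simpa [hx] using f.map_adj_iff.mpr hxy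
  exact hne (f.injective (h _ hadj hne))

theorem IsAsymmetric.compl (h : G.IsAsymmetric) : Gᶜ.IsAsymmetric := fun f =>
  h { f.toEquiv with map_rel_iff' := (Embedding.complEquiv.symm f.toEmbedding).map_rel_iff }

theorem Iso.exists_comap_of_apply_mem_range [Finite α] (f : G ≃g G) {e : α → V}
    (he : e.Injective) (hf : ∀ a, f (e a) ∈ Set.range e) :
    ∃ g : G.comap e ≃g G.comap e, ∀ a, f (e a) = e (g a) := by
  choose g hg using hf
  have ginj : g.Injective := fun a b hab => he (f.injective (by rw [← hg, ← hg, hab]))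
  refine ⟨⟨Equiv.ofBijective g (Finite.injective_iff_bijective.mp ginj), ?_⟩, fun a => (hg a).symm⟩
  intro a b
  simp [hg, f.map_adj_iff]

end SimpleGraph

open SimpleGraph

/-- The path `0 - 1 - ⋯ - (s-3)`, the pendant edge `2 - (s-2)`, and the isolated vertex `s-1`. -/
def spiderGraph (s : ℕ) : SimpleGraph (Fin s) :=
  fromRel fun a b => (a.val + 1 = b.val ∧ b.val + 3 ≤ s) ∨ (a.val = 2 ∧ b.val + 2 = s)

section spiderGraph

variable {s : ℕ}

theorem spiderGraph_adj {a b : Fin s} :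
    (spiderGraph s).Adj a b ↔ a ≠ b ∧ ((a.val + 1 = b.val ∧ b.val + 3 ≤ s) ∨
      (b.val + 1 = a.val ∧ a.val + 3 ≤ s) ∨ (a.val = 2 ∧ b.val + 2 = s) ∨
      (b.val = 2 ∧ a.val + 2 = s)) := by
  simp only [spiderGraph, fromRel_adj]
  tauto

theorem two_lt_encard_neighborSet_spiderGraph_iff (hs : 6 ≤ s) (a : Fin s) :
    2 < ((spiderGraph s).neighborSet a).encard ↔ a.val = 2 := by
  simp only [Set.two_lt_encard_iff, mem_neighborSet, spiderGraph_adj]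
  refine ⟨fun ⟨b, c, d, hb, hc, hd, hbc, hbd, hcd⟩ => by omega, fun ha => ?_⟩
  exact ⟨⟨1, by omega⟩, ⟨3, by omega⟩, ⟨s - 2, by omega⟩, by simp [Fin.ext_iff]; omega⟩

theorem one_lt_encard_neighborSet_spiderGraph_iff (hs : 6 ≤ s) (a : Fin s) :
    1 < ((spiderGraph s).neighborSet a).encard ↔ 1 ≤ a.val ∧ a.val + 4 ≤ s := by
  simp only [Set.one_lt_encard_iff, mem_neighborSet, spiderGraph_adj]
  refine ⟨fun ⟨b, c, hb, hc, hbc⟩ => by omega, fun ha => ?_⟩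
  exact ⟨⟨a - 1, by omega⟩, ⟨a + 1, by omega⟩, by simp [Fin.ext_iff]; omega⟩

theorem spiderGraph_iso_val_eq_two_iff (hs : 6 ≤ s) (f : spiderGraph s ≃g spiderGraph s)
    (a : Fin s) : (f a).val = 2 ↔ a.val = 2 := by
  rw [← two_lt_encard_neighborSet_spiderGraph_iff hs, f.encard_neighborSet,
    two_lt_encard_neighborSet_spiderGraph_iff hs]

theorem spiderGraph_iso_inner_iff (hs : 6 ≤ s) (f : spiderGraph s ≃g spiderGraph s) (a : Fin s) :
    (1 ≤ (f a).val ∧ (f a).val + 4 ≤ s) ↔ (1 ≤ a.val ∧ a.val + 4 ≤ s) := by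
  rw [← one_lt_encard_neighborSet_spiderGraph_iff hs, f.encard_neighborSet,
    one_lt_encard_neighborSet_spiderGraph_iff hs]

theorem spiderGraph_iso_apply_eq_of_val_le_three (hs : 8 ≤ s)
    (f : spiderGraph s ≃g spiderGraph s) {a : Fin s} (ha : a.val ≤ 3) : f a = a := by
  have hadj {a b : Fin s} (h : (spiderGraph s).Adj a b) : (spiderGraph s).Adj (f a) (f b) :=
    f.map_adj_iff.mpr h
  have hcenter := spiderGraph_iso_val_eq_two_iff (by omega) f
  have hinner := spiderGraph_iso_inner_iff (by omega) f
  obtain ⟨v₀, h₀⟩ : ∃ v : Fin s, v.val = 0 := ⟨⟨0, by omega⟩, rfl⟩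
  obtain ⟨v₁, h₁⟩ : ∃ v : Fin s, v.val = 1 := ⟨⟨1, by omega⟩, rfl⟩
  obtain ⟨v₂, h₂⟩ : ∃ v : Fin s, v.val = 2 := ⟨⟨2, by omega⟩, rfl⟩
  obtain ⟨v₃, h₃⟩ : ∃ v : Fin s, v.val = 3 := ⟨⟨3, by omega⟩, rfl⟩
  have hf₂ : f v₂ = v₂ := Fin.ext (by rw [(hcenter v₂).mpr h₂, h₂])
  -- `f v₁` is `1` or `3`; in the second case `f v₀` would be `4`, a vertex of degree two unlike `0`
  have hf₁ : f v₁ = v₁ := by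
    have h := hadj (a := v₂) (b := v₁) (spiderGraph_adj.mpr (by omega))
    have h' := hadj (a := v₁) (b := v₀) (spiderGraph_adj.mpr (by omega))
    rw [hf₂, spiderGraph_adj] at h
    rw [spiderGraph_adj] at h'
    have := hinner v₁
    have := hinner v₀
    have := hcenter v₀
    exact Fin.ext (by omega)
  have hf₀ : f v₀ = v₀ := by
    have h := hadj (a := v₁) (b := v₀) (spiderGraph_adj.mpr (by omega))
    rw [hf₁, spiderGraph_adj] at h
    have := hcenter v₀
    exact Fin.ext (by omega)
  have hf₃ : f v₃ = v₃ := by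
    have h := hadj (a := v₂) (b := v₃) (spiderGraph_adj.mpr (by omega))
    rw [hf₂, spiderGraph_adj] at h
    have := hinner v₃
    have : f v₃ ≠ f v₁ := f.injective.ne (by omega)
    rw [hf₁] at this
    exact Fin.ext (by omega)
  obtain rfl | rfl | rfl | rfl : a = v₀ ∨ a = v₁ ∨ a = v₂ ∨ a = v₃ := by omega
  exacts [hf₀, hf₁, hf₂, hf₃]

theorem spiderGraph_isAsymmetric (hs : 8 ≤ s) : (spiderGraph s).IsAsymmetric := by
  intro f
  have hleaf (a : Fin s) (ha : a.val + 2 = s) : f a = a := by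
    obtain ⟨c, hc⟩ : ∃ c : Fin s, c.val = 2 := ⟨⟨2, by omega⟩, rfl⟩
    have h := f.map_adj_iff.mpr (spiderGraph_adj.mpr (by omega : c ≠ a ∧ _))
    rw [spiderGraph_iso_apply_eq_of_val_le_three hs f (by omega), spiderGraph_adj] at h
    have := spiderGraph_iso_inner_iff (by omega) f a
    exact Fin.ext (by omega)
  have hpath (k : ℕ) (hk : 3 ≤ k) (a : Fin s) (ha : a.val ≤ k) (has : a.val + 3 ≤ s) :
      f a = a := by
    induction k, hk using Nat.le_induction generalizing a with
    | base => exact spiderGraph_iso_apply_eq_of_val_le_three hs f ha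
    | succ k hk ih =>
      rcases Nat.lt_or_ge a.val (k + 1) with h | h
      · exact ih a (by omega) has
      obtain ⟨b, hb⟩ : ∃ b : Fin s, b.val = k := ⟨⟨k, by omega⟩, rfl⟩
      refine f.apply_eq_of_adj (ih b (by omega) (by omega)) (spiderGraph_adj.mpr (by omega))
        fun z hz hza => ih z ?_ ?_ <;> (rw [spiderGraph_adj] at hz; omega)
  have hfix (a : Fin s) (ha : a.val + 2 ≤ s) : f a = a := by
    rcases Nat.lt_or_ge (a.val + 2) s with h | h
    · exact hpath s (by omega) a (by omega) (by omega)
    · exact hleaf a (by omega)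
  intro a
  rcases Nat.lt_or_ge (a.val + 2) (s + 1) with h | h
  · exact hfix a (by omega)
  · exact f.injective.apply_eq_of_forall_ne fun z hz => hfix z (by omega)

end spiderGraph

abbrev splitGraph (s t : ℕ) : SimpleGraph (Fin s ⊕ Fin t) :=
  (completeGraph (Fin s)).disjUnionGraph (⊥ : SimpleGraph (Fin t))

/-- The spider on the clique, and the path `(s-1) - 0 - 1 - ⋯ - (t-2)` that starts in the clique
and leaves the last isolated vertex `t-1` alone. -/
def splitFlipGraph (s t : ℕ) : SimpleGraph (Fin s ⊕ Fin t) :=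
  fromRel fun x y => match x, y with
    | .inl a, .inl b => (spiderGraph s).Adj a b
    | .inr j, .inl a => j.val = 0 ∧ 2 ≤ t ∧ a.val + 1 = s
    | .inr j, .inr k => j.val = k.val + 1 ∧ j.val + 2 ≤ t
    | .inl _, .inr _ => False

def asymSplitGraph (s t : ℕ) : SimpleGraph (Fin s ⊕ Fin t) := splitGraph s t ∆ splitFlipGraph s t

section asymSplitGraph

variable {s t : ℕ}

@[simp] theorem asymSplitGraph_adj_inl_inl {a b : Fin s} :
    (asymSplitGraph s t).Adj (.inl a) (.inl b) ↔ (spiderGraph s)ᶜ.Adj a b := by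
  have := (spiderGraph s).adj_comm a b
  simp [asymSplitGraph, symmDiff_def, SimpleGraph.disjUnionGraph, splitFlipGraph]
  tauto

@[simp] theorem asymSplitGraph_adj_inl_inr {a : Fin s} {j : Fin t} :
    (asymSplitGraph s t).Adj (.inl a) (.inr j) ↔ j.val = 0 ∧ 2 ≤ t ∧ a.val + 1 = s := by
  simp [asymSplitGraph, symmDiff_def, SimpleGraph.disjUnionGraph, splitFlipGraph]

@[simp] theorem asymSplitGraph_adj_inr_inl {a : Fin s} {j : Fin t} :
    (asymSplitGraph s t).Adj (.inr j) (.inl a) ↔ j.val = 0 ∧ 2 ≤ t ∧ a.val + 1 = s := by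
  rw [adj_comm, asymSplitGraph_adj_inl_inr]

@[simp] theorem asymSplitGraph_adj_inr_inr {j k : Fin t} :
    (asymSplitGraph s t).Adj (.inr j) (.inr k) ↔
      (j.val = k.val + 1 ∧ j.val + 2 ≤ t) ∨ (k.val = j.val + 1 ∧ k.val + 2 ≤ t) := by
  simp [asymSplitGraph, symmDiff_def, SimpleGraph.disjUnionGraph, splitFlipGraph]
  omega

theorem asymSplitGraph_comap_inl : (asymSplitGraph s t).comap Sum.inl = (spiderGraph s)ᶜ := by
  ext
  simp

theorem two_lt_encard_neighborSet_inl (hs : 8 ≤ s) (a : Fin s) :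
    2 < ((asymSplitGraph s t).neighborSet (.inl a)).encard := by
  obtain ⟨x, y, z, hxy, hxz, hyz, hx, hy, hz⟩ : ∃ x y z : Fin s, x ≠ y ∧ x ≠ z ∧ y ≠ z ∧
      (spiderGraph s)ᶜ.Adj a x ∧ (spiderGraph s)ᶜ.Adj a y ∧ (spiderGraph s)ᶜ.Adj a z := by
    simp only [compl_adj, spiderGraph_adj]
    rcases (by omega : a.val ≤ 2 ∨ a.val + 1 = s ∨ (3 ≤ a.val ∧ a.val + 2 ≤ s)) with h | h | h
    · exact ⟨⟨4, by omega⟩, ⟨5, by omega⟩, ⟨s - 1, by omega⟩, by simp [Fin.ext_iff]; omega⟩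
    · exact ⟨⟨0, by omega⟩, ⟨1, by omega⟩, ⟨2, by omega⟩, by simp [Fin.ext_iff]; omega⟩
    · exact ⟨⟨0, by omega⟩, ⟨1, by omega⟩, ⟨s - 1, by omega⟩, by simp [Fin.ext_iff]; omega⟩
  exact Set.two_lt_encard_iff.mpr ⟨.inl x, .inl y, .inl z, by simpa, by simpa, by simpa,
    by simpa, by simpa, by simpa⟩

theorem not_two_lt_encard_neighborSet_inr (j : Fin t) :
    ¬ 2 < ((asymSplitGraph s t).neighborSet (.inr j)).encard := by
  rw [Set.two_lt_encard_iff]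
  rintro ⟨x | x, y | y, z | z, hx, hy, hz, hxy, hxz, hyz⟩ <;>
    simp only [mem_neighborSet, asymSplitGraph_adj_inr_inl, asymSplitGraph_adj_inr_inr]
      at hx hy hz <;>
    simp only [ne_eq, Sum.inl.injEq, Sum.inr.injEq] at hxy hxz hyz <;>
    omega

theorem asymSplitGraph_isAsymmetric (hs : 8 ≤ s) : (asymSplitGraph s t).IsAsymmetric := by
  intro f
  have hmaps (a : Fin s) : f (.inl a) ∈ Set.range Sum.inl := by
    rcases h : f (.inl a) with b | j
    · exact ⟨b, rfl⟩
    · have := f.encard_neighborSet (.inl a) ▸ two_lt_encard_neighborSet_inl hs a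
      rw [h] at this
      exact absurd this (not_two_lt_encard_neighborSet_inr j)
  obtain ⟨g, hg⟩ := f.exists_comap_of_apply_mem_range Sum.inl_injective hmaps
  have hasym : ((asymSplitGraph s t).comap Sum.inl).IsAsymmetric :=
    asymSplitGraph_comap_inl ▸ (spiderGraph_isAsymmetric hs).compl
  have hinl (a : Fin s) : f (.inl a) = .inl a := by rw [hg, hasym g a]
  obtain ⟨r, hr⟩ : ∃ r : Fin s, r.val + 1 = s := ⟨⟨s - 1, by omega⟩, by simp; omega⟩
  have hinr (n : ℕ) (j : Fin t) (hj : j.val ≤ n) (hjt : j.val + 2 ≤ t) :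
      f (.inr j) = .inr j := by
    induction n generalizing j with
    | zero =>
      refine f.apply_eq_of_adj (hinl r) (by simp; omega) ?_
      rintro (b | k) hk hne
      · exact hinl b
      · simp at hk hne
        omega
    | succ n ih =>
      rcases Nat.lt_or_ge j.val (n + 1) with h | h
      · exact ih j (by omega) hjt
      obtain ⟨i, hi⟩ : ∃ i : Fin t, i.val = n := ⟨⟨n, by omega⟩, rfl⟩
      refine f.apply_eq_of_adj (ih i (by omega) (by omega)) (by simp; omega) ?_
      rintro (b | k) hk hne
      · exact hinl b
      · simp at hk hne
        exact ih k (by omega) (by omega)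
  rintro (a | j)
  · exact hinl a
  rcases Nat.lt_or_ge (j.val + 1) t with h | h
  · exact hinr t j (by omega) (by omega)
  refine f.injective.apply_eq_of_forall_ne ?_
  rintro (b | k) hk
  · exact hinl b
  · exact hinr t k (by omega) (by simp at hk; omega)

/-- Enumerates the edges of `splitFlipGraph s t` as the edges from each vertex to its
predecessor on the path or, for `s-2`, to `2`. -/
def splitFlipEdge (s t : ℕ) [NeZero s] : Fin (s - 2) ⊕ Fin (t - 1) → Sym2 (Fin s ⊕ Fin t)
  | .inl i => s(.inl ⟨i + 1, by omega⟩, .inl ⟨if i.val + 3 = s then 2 else i, by split <;> omega⟩)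
  | .inr j => s(.inr ⟨j, by omega⟩,
      if j.val = 0 then .inl ⟨s - 1, by have := NeZero.pos s; omega⟩ else .inr ⟨j - 1, by omega⟩)

theorem edgeSet_splitFlipGraph_subset [NeZero s] :
    (splitFlipGraph s t).edgeSet ⊆ Set.range (splitFlipEdge s t) := by
  intro e
  induction e using Sym2.ind with | _ x y => ?_
  rw [mem_edgeSet, splitFlipGraph, fromRel_adj]
  rintro ⟨hne, h⟩
  rcases x with a | j <;> rcases y with b | k <;>
    simp only [spiderGraph_adj, false_or, or_false] at h
  · have h' : (a.val + 1 = b.val ∧ b.val + 3 ≤ s) ∨ (b.val + 1 = a.val ∧ a.val + 3 ≤ s) ∨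
        (a.val = 2 ∧ b.val + 2 = s) ∨ (b.val = 2 ∧ a.val + 2 = s) := by omega
    rcases h' with h | h | h | h
    · exact ⟨.inl ⟨a, by omega⟩, by simp [splitFlipEdge, Fin.ext_iff]; omega⟩
    · exact ⟨.inl ⟨b, by omega⟩, by simp [splitFlipEdge, Fin.ext_iff]; omega⟩
    · exact ⟨.inl ⟨s - 3, by omega⟩, by
        simp [splitFlipEdge, Fin.ext_iff, show s - 3 + 3 = s by omega]; omega⟩
    · exact ⟨.inl ⟨s - 3, by omega⟩, by
        simp [splitFlipEdge, Fin.ext_iff, show s - 3 + 3 = s by omega]; omega⟩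
  · exact ⟨.inr ⟨0, by omega⟩, by simp [splitFlipEdge, Fin.ext_iff]; omega⟩
  · exact ⟨.inr ⟨0, by omega⟩, by simp [splitFlipEdge, Fin.ext_iff]; omega⟩
  · rcases h with h | h
    · exact ⟨.inr ⟨j, by omega⟩, by
        simp [splitFlipEdge, Fin.ext_iff, show j.val ≠ 0 by omega]; omega⟩
    · exact ⟨.inr ⟨k, by omega⟩, by
        simp [splitFlipEdge, Fin.ext_iff, show k.val ≠ 0 by omega]; omega⟩

theorem encard_edgeSet_splitFlipGraph_le [NeZero s] :
    (splitFlipGraph s t).edgeSet.encard ≤ ((s - 2 + (t - 1) : ℕ) : ℕ∞) :=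
  calc (splitFlipGraph s t).edgeSet.encard
      ≤ (Set.range (splitFlipEdge s t)).encard :=
        Set.encard_le_encard edgeSet_splitFlipGraph_subset
    _ ≤ ENat.card (Fin (s - 2) ⊕ Fin (t - 1)) := by
        rw [← Set.image_univ, ← Set.encard_univ]
        exact Set.encard_image_le _ _
    _ = ((s - 2 + (t - 1) : ℕ) : ℕ∞) := by simp

end asymSplitGraph

theorem asymIndex_split_le_general {s t : ℕ} (hs : 8 ≤ s) :
    ((SimpleGraph.completeGraph (Fin s)).disjUnionGraph (⊥ : SimpleGraph (Fin t))).asymIndex ≤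
      (((s - 2) + (t - 1) : ℕ) : ℕ∞) := by
  have : NeZero s := ⟨by omega⟩
  exact (asymIndex_le_encard_edgeSet (asymSplitGraph_isAsymmetric hs)).trans
    encard_edgeSet_splitFlipGraph_le

/-- For `s ≥ 8` and `t ≥ 1`, the split graph `K_s + tK_1` (a complete graph on `s`
vertices together with `t` isolated vertices) satisfies
`ai(K_s + tK_1) ≤ (s - 2) + (t - 1)`. -/
theorem asymIndex_split_le {s t : ℕ} (hs : 8 ≤ s) (ht : 1 ≤ t) :
    ((SimpleGraph.completeGraph (Fin s)).disjUnionGraph (⊥ : SimpleGraph (Fin t))).asymIndex ≤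
      (((s - 2) + (t - 1) : ℕ) : ℕ∞) :=
  asymIndex_split_le_general hs
end
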